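/- arXiv:2310.01013 — 4 statements merged into one kernel-verified Lean document; each statement's English description precedes it below -/
import Mathlib

section
/- For every integer n with -3 ≤ n ≤ 7, one has c(r + n) = α^n·β·c(n) in ZMod p. -/
theorem stmt5 (p : ℕ) [Fact p.Prime] (hodd : Odd p)
    (c : ℤ → ZMod p)
    (hneg : ∀ n : ℤ, c (-n) = - c n)
    (h0 : c 0 = 0) (h1 : c 1 = 0) (h2 : c 2 = 1)
    (hS8 : ∀ n : ℤ, c 4 * c (n + 4) * c (n - 4) =
      c 3 * c 5 * c (n + 3) * c (n - 3)
      + (c 4 ^ 3 - c 3 ^ 3 * c 5) * c (n + 2) * c (n - 2)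
      + c 3 ^ 2 * c 6 * c (n + 1) * c (n - 1)
      - c 4 * c 6 * c n ^ 2)
    (hS9 : ∀ n : ℤ, c 3 * c 5 * c (n + 5) * c (n - 4) =
      c 3 ^ 2 * c 6 * c (n + 4) * c (n - 3)
      + c 4 * (c 5 ^ 2 - c 3 ^ 2 * c 6) * c (n + 3) * c (n - 2)
      + c 3 * c 4 * c 7 * c (n + 2) * c (n - 1)
      - c 5 * c 7 * c (n + 1) * c n)
    (hS10 : ∀ n : ℤ, c 4 * c (n + 5) * c (n - 5) =
      c 4 * c 6 * c (n + 3) * c (n - 3)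
      + c 4 * (c 5 ^ 2 - c 3 ^ 2 * c 6) * c (n + 2) * c (n - 2)
      + (c 3 ^ 3 * c 7 - c 8) * c (n + 1) * c (n - 1)
      - c 3 * c 4 * c 7 * c n ^ 2)
    (hS11 : ∀ n : ℤ, c 3 * c 5 * c (n + 6) * c (n - 5) =
      c 3 * c 4 * c 7 * c (n + 4) * c (n - 3)
      + (c 5 ^ 2 * c 6 - c 3 * c 4 ^ 2 * c 7) * c (n + 3) * c (n - 2)
      + c 3 * (c 3 * c 4 * c 8 - c 9) * c (n + 2) * c (n - 1)
      - c 3 * c 5 * c 8 * c (n + 1) * c n)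
    (h3 : c 3 ≠ 0) (h4 : c 4 ≠ 0) (h5 : c 5 ≠ 0) (h6 : c 6 ≠ 0) (h7 : c 7 ≠ 0)
    (h435 : c 4 ^ 3 - c 3 ^ 3 * c 5 ≠ 0)
    (hfour : ∀ m : ℤ, c m ≠ 0 ∨ c (m + 1) ≠ 0 ∨ c (m + 2) ≠ 0 ∨ c (m + 3) ≠ 0)
    (r : ℕ) (hrpos : 0 < r)
    (hr1 : c ((r : ℤ) - 1) = 0) (hr0 : c (r : ℤ) = 0) (hr2 : c ((r : ℤ) + 1) = 0)
    (hr3 : c ((r : ℤ) + 3) ≠ 0)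
    (α β : ZMod p)
    (hα : α = c ((r : ℤ) + 3) * (c 3 * c ((r : ℤ) + 2))⁻¹)
    (hβ : β = c 3 ^ 2 * c ((r : ℤ) + 2) ^ 3 * (c ((r : ℤ) + 3) ^ 2)⁻¹)
    :
    ∀ n : ℤ, -3 ≤ n → n ≤ 7 → c ((r : ℤ) + n) = α ^ n * β * c n := by

  set X : ℤ := (r : ℤ) with hX
  -- nonzero of c(X+2)
  have hu : c (X + 2) ≠ 0 := by
    have h := hfour (X - 1)
    rw [show X - 1 + 1 = X by ring, show X - 1 + 2 = X + 1 by ring,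
        show X - 1 + 3 = X + 2 by ring] at h
    rcases h with h | h | h | h
    · exact absurd hr1 h
    · exact absurd hr0 h
    · exact absurd hr2 h
    · exact h
  have hbne : c (X - 2) ≠ 0 := by
    have h := hfour (X - 2)
    rw [show X - 2 + 1 = X - 1 by ring, show X - 2 + 2 = X by ring,
        show X - 2 + 3 = X + 1 by ring] at h
    rcases h with h | h | h | h
    · exact h
    · exact absurd hr1 h
    · exact absurd hr0 h
    · exact absurd hr2 h
  have hv : c (X + 3) ≠ 0 := hr3
  -- recurrence instances
  have e1 : c 3 ^ 2 * c 6 * c (X + 4) * c (X + 2) = c 4 * c 6 * c (X + 3) ^ 2 := by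
    have h := hS8 (X + 3)
    rw [show X + 3 + 4 = X + 7 by ring, show X + 3 - 4 = X - 1 by ring,
        show X + 3 + 3 = X + 6 by ring, show X + 3 - 3 = X by ring,
        show X + 3 + 2 = X + 5 by ring, show X + 3 - 2 = X + 1 by ring,
        show X + 3 + 1 = X + 4 by ring, show X + 3 - 1 = X + 2 by ring,
        hr1, hr0, hr2] at h
    linear_combination -h
  have e2 : c 3 * c 4 * c 7 * c (X + 5) * c (X + 2) = c 5 * c 7 * c (X + 4) * c (X + 3) := by
    have h := hS9 (X + 3)
    rw [show X + 3 + 5 = X + 8 by ring, show X + 3 - 4 = X - 1 by ring,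
        show X + 3 + 4 = X + 7 by ring, show X + 3 - 3 = X by ring,
        show X + 3 + 3 = X + 6 by ring, show X + 3 - 2 = X + 1 by ring,
        show X + 3 + 2 = X + 5 by ring, show X + 3 - 1 = X + 2 by ring,
        show X + 3 + 1 = X + 4 by ring,
        hr1, hr0, hr2] at h
    linear_combination -h
  have e3 : c 4 * c (X + 5) * c (X - 3) = c 3 * c 5 * c (X + 4) * c (X - 2) := by
    have h := hS8 (X + 1)
    rw [show X + 1 + 4 = X + 5 by ring, show X + 1 - 4 = X - 3 by ring,
        show X + 1 + 3 = X + 4 by ring, show X + 1 - 3 = X - 2 by ring,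
        show X + 1 + 2 = X + 3 by ring, show X + 1 - 2 = X - 1 by ring,
        show X + 1 + 1 = X + 2 by ring, show X + 1 - 1 = X by ring,
        hr1, hr0, hr2] at h
    linear_combination h
  have e4 : c 3 * c 5 * c (X + 6) * c (X - 3) = c 3 ^ 2 * c 6 * c (X + 5) * c (X - 2) := by
    have h := hS9 (X + 1)
    rw [show X + 1 + 5 = X + 6 by ring, show X + 1 - 4 = X - 3 by ring,
        show X + 1 + 4 = X + 5 by ring, show X + 1 - 3 = X - 2 by ring,
        show X + 1 + 3 = X + 4 by ring, show X + 1 - 2 = X - 1 by ring,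
        show X + 1 + 2 = X + 3 by ring, show X + 1 - 1 = X by ring,
        show X + 1 + 1 = X + 2 by ring,
        hr1, hr0, hr2] at h
    linear_combination h
  have e5 : c 4 * c (X + 6) * c (X - 2) = -(c 4 * c 6 * c (X + 2) ^ 2) := by
    have h := hS8 (X + 2)
    rw [show X + 2 + 4 = X + 6 by ring, show X + 2 - 4 = X - 2 by ring,
        show X + 2 + 3 = X + 5 by ring, show X + 2 - 3 = X - 1 by ring,
        show X + 2 + 2 = X + 4 by ring, show X + 2 - 2 = X by ring,
        show X + 2 + 1 = X + 3 by ring, show X + 2 - 1 = X + 1 by ring,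
        hr1, hr0, hr2] at h
    linear_combination h
  have e6 : c 3 * c 5 * c (X + 7) * c (X - 2) = -(c 5 * c 7 * c (X + 3) * c (X + 2)) := by
    have h := hS9 (X + 2)
    rw [show X + 2 + 5 = X + 7 by ring, show X + 2 - 4 = X - 2 by ring,
        show X + 2 + 4 = X + 6 by ring, show X + 2 - 3 = X - 1 by ring,
        show X + 2 + 3 = X + 5 by ring, show X + 2 - 2 = X by ring,
        show X + 2 + 2 = X + 4 by ring, show X + 2 - 1 = X + 1 by ring,
        show X + 2 + 1 = X + 3 by ring,
        hr1, hr0, hr2] at h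
    linear_combination h
  -- closed forms (division-free)
  have hd : c 3 ^ 2 * c (X + 2) * c (X + 4) = c 4 * c (X + 3) ^ 2 :=
    mul_left_cancel₀ h6 (by linear_combination e1)
  have he : c 3 ^ 3 * c (X + 2) ^ 2 * c (X + 5) = c 5 * c (X + 3) ^ 3 := by
    apply mul_left_cancel₀ (mul_ne_zero h4 h7)
    -- c4*c7*(c3^3 u^2 e) = c4*c7*(c5 v^3)
    linear_combination c 3 ^ 2 * c (X + 2) * e2 + c 5 * c 7 * c (X + 3) * hd
  have ha : c (X + 3) * c (X - 3) = c 3 ^ 2 * c (X + 2) * c (X - 2) := by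
    apply mul_left_cancel₀ (mul_ne_zero (mul_ne_zero h4 h5) (pow_ne_zero 2 hv))
    linear_combination c 3 ^ 3 * c (X + 2) ^ 2 * e3 - c 4 * c (X - 3) * he
      + c 3 ^ 2 * c 5 * c (X + 2) * c (X - 2) * hd
  have hf : c 3 ^ 4 * c (X + 2) ^ 3 * c (X + 6) = c 6 * c (X + 3) ^ 4 := by
    apply mul_left_cancel₀ (mul_ne_zero (mul_ne_zero h5 (pow_ne_zero 2 h3)) hbne)
    linear_combination c 3 ^ 3 * c (X + 2) ^ 2 * c (X + 3) * e4
      - c 3 ^ 4 * c 5 * c (X + 2) ^ 2 * c (X + 6) * ha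
      + c 3 ^ 2 * c 6 * c (X - 2) * c (X + 3) * he
  have hb2 : c (X + 3) ^ 4 * c (X - 2) = -(c 3 ^ 4 * c (X + 2) ^ 5) := by
    apply mul_left_cancel₀ (mul_ne_zero h4 h6)
    linear_combination c 3 ^ 4 * c (X + 2) ^ 3 * e5 - c 4 * c (X - 2) * hf
  have ha2 : c (X + 3) ^ 5 * c (X - 3) = -(c 3 ^ 6 * c (X + 2) ^ 6) := by
    linear_combination c (X + 3) ^ 4 * ha + c 3 ^ 2 * c (X + 2) * hb2
  have hg : c 3 ^ 5 * c (X + 2) ^ 4 * c (X + 7) = c 7 * c (X + 3) ^ 5 := by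
    apply mul_left_cancel₀ (mul_ne_zero h5 hu)
    linear_combination -c (X + 3) ^ 4 * e6 + c 3 * c 5 * c (X + 7) * hb2
  intro n hn1 hn2
  have hm1 : c (-1) = 0 := by rw [show (-1 : ℤ) = -(1 : ℤ) from rfl, hneg, h1, neg_zero]
  have hm2 : c (-2) = -(1 : ZMod p) := by rw [show (-2 : ℤ) = -(2 : ℤ) from rfl, hneg, h2]
  have hm3 : c (-3) = -c 3 := by rw [show (-3 : ℤ) = -(3 : ℤ) from rfl, hneg]
  interval_cases n
  · rw [show X + -3 = X - 3 by ring, hm3, zpow_neg,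
        show (3 : ℤ) = ((3 : ℕ) : ℤ) from rfl, zpow_natCast, hα, hβ]
    field_simp
    linear_combination ha2
  · rw [show X + -2 = X - 2 by ring, hm2, zpow_neg,
        show (2 : ℤ) = ((2 : ℕ) : ℤ) from rfl, zpow_natCast, hα, hβ]
    field_simp
    linear_combination hb2
  · rw [show X + -1 = X - 1 by ring, hr1, hm1, mul_zero]
  · rw [show X + 0 = X by ring, hr0, h0, mul_zero]
  · rw [hr2, h1, mul_zero]
  · rw [h2, mul_one, show (2 : ℤ) = ((2 : ℕ) : ℤ) from rfl, zpow_natCast, hα, hβ]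
    field_simp
    ring
  · rw [show (3 : ℤ) = ((3 : ℕ) : ℤ) from rfl, zpow_natCast, hα, hβ]
    field_simp
    ring
  · rw [show (4 : ℤ) = ((4 : ℕ) : ℤ) from rfl, zpow_natCast, hα, hβ]
    field_simp
    push_cast
    linear_combination hd
  · rw [show (5 : ℤ) = ((5 : ℕ) : ℤ) from rfl, zpow_natCast, hα, hβ]
    field_simp
    push_cast
    linear_combination he
  · rw [show (6 : ℤ) = ((6 : ℕ) : ℤ) from rfl, zpow_natCast, hα, hβ]
    field_simp
    push_cast
    linear_combination hf
  · rw [show (7 : ℤ) = ((7 : ℕ) : ℤ) from rfl, zpow_natCast, hα, hβ]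
    field_simp
    push_cast
    linear_combination hg
end

section
/- For every integer n ∈ ℤ, one has c(r + n) = α^n·β·c(n) in ZMod p. -/
theorem seq_ext {K : Type*} [Field K] (q3 q4 q5 q6 q7 q8 q9 : K)
    (hq4 : q4 ≠ 0) (hq35 : q3 * q5 ≠ 0)
    (u v : ℤ → K)
    (hu8 : ∀ n : ℤ, q4 * u (n + 4) * u (n - 4) =
      q3 * q5 * u (n + 3) * u (n - 3)
      + (q4 ^ 3 - q3 ^ 3 * q5) * u (n + 2) * u (n - 2)
      + q3 ^ 2 * q6 * u (n + 1) * u (n - 1)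
      - q4 * q6 * u n ^ 2)
    (hu9 : ∀ n : ℤ, q3 * q5 * u (n + 5) * u (n - 4) =
      q3 ^ 2 * q6 * u (n + 4) * u (n - 3)
      + q4 * (q5 ^ 2 - q3 ^ 2 * q6) * u (n + 3) * u (n - 2)
      + q3 * q4 * q7 * u (n + 2) * u (n - 1)
      - q5 * q7 * u (n + 1) * u n)
    (hu10 : ∀ n : ℤ, q4 * u (n + 5) * u (n - 5) =
      q4 * q6 * u (n + 3) * u (n - 3)
      + q4 * (q5 ^ 2 - q3 ^ 2 * q6) * u (n + 2) * u (n - 2)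
      + (q3 ^ 3 * q7 - q8) * u (n + 1) * u (n - 1)
      - q3 * q4 * q7 * u n ^ 2)
    (hu11 : ∀ n : ℤ, q3 * q5 * u (n + 6) * u (n - 5) =
      q3 * q4 * q7 * u (n + 4) * u (n - 3)
      + (q5 ^ 2 * q6 - q3 * q4 ^ 2 * q7) * u (n + 3) * u (n - 2)
      + q3 * (q3 * q4 * q8 - q9) * u (n + 2) * u (n - 1)
      - q3 * q5 * q8 * u (n + 1) * u n)
    (hv8 : ∀ n : ℤ, q4 * v (n + 4) * v (n - 4) =
      q3 * q5 * v (n + 3) * v (n - 3)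
      + (q4 ^ 3 - q3 ^ 3 * q5) * v (n + 2) * v (n - 2)
      + q3 ^ 2 * q6 * v (n + 1) * v (n - 1)
      - q4 * q6 * v n ^ 2)
    (hv9 : ∀ n : ℤ, q3 * q5 * v (n + 5) * v (n - 4) =
      q3 ^ 2 * q6 * v (n + 4) * v (n - 3)
      + q4 * (q5 ^ 2 - q3 ^ 2 * q6) * v (n + 3) * v (n - 2)
      + q3 * q4 * q7 * v (n + 2) * v (n - 1)
      - q5 * q7 * v (n + 1) * v n)
    (hv10 : ∀ n : ℤ, q4 * v (n + 5) * v (n - 5) =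
      q4 * q6 * v (n + 3) * v (n - 3)
      + q4 * (q5 ^ 2 - q3 ^ 2 * q6) * v (n + 2) * v (n - 2)
      + (q3 ^ 3 * q7 - q8) * v (n + 1) * v (n - 1)
      - q3 * q4 * q7 * v n ^ 2)
    (hv11 : ∀ n : ℤ, q3 * q5 * v (n + 6) * v (n - 5) =
      q3 * q4 * q7 * v (n + 4) * v (n - 3)
      + (q5 ^ 2 * q6 - q3 * q4 ^ 2 * q7) * v (n + 3) * v (n - 2)
      + q3 * (q3 * q4 * q8 - q9) * v (n + 2) * v (n - 1)
      - q3 * q5 * q8 * v (n + 1) * v n)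
    (hfu : ∀ m : ℤ, u m ≠ 0 ∨ u (m + 1) ≠ 0 ∨ u (m + 2) ≠ 0 ∨ u (m + 3) ≠ 0)
    (base : ∀ m : ℤ, -5 ≤ m → m ≤ 6 → u m = v m) :
    ∀ n : ℤ, u n = v n := by
  have up : ∀ k : ℕ, ∀ m : ℤ, -5 ≤ m → m ≤ 6 + (k:ℤ) → u m = v m := by
    intro k
    induction k with
    | zero => intro m h1 h2; exact base m h1 (by omega)
    | succ k ih =>
      intro m h1 h2
      by_cases hm : m ≤ 6 + (k:ℤ)
      · exact ih m h1 hm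
      have hm7 : m = 7 + (k:ℤ) := by push_cast at h2 ⊢; omega
      -- known window
      have W : ∀ j : ℤ, m - 11 ≤ j → j ≤ m - 1 → u j = v j := by
        intro j hj1 hj2; exact ih j (by omega) (by omega)
      rcases hfu (m - 11) with h | h | h | h
      · -- u (m-11) ≠ 0, use S11 at n = m - 6
        have hu := hu11 (m - 6)
        have hv := hv11 (m - 6)
        simp only [show m-6+6 = m by ring, show m-6-5 = m-11 by ring,
          show m-6+4 = m-2 by ring, show m-6-3 = m-9 by ring,
          show m-6+3 = m-3 by ring, show m-6-2 = m-8 by ring,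
          show m-6+2 = m-4 by ring, show m-6-1 = m-7 by ring,
          show m-6+1 = m-5 by ring] at hu hv
        rw [W (m-2) (by omega) (by omega), W (m-9) (by omega) (by omega),
          W (m-3) (by omega) (by omega), W (m-8) (by omega) (by omega),
          W (m-4) (by omega) (by omega), W (m-7) (by omega) (by omega),
          W (m-5) (by omega) (by omega), W (m-6) (by omega) (by omega),
          W (m-11) (by omega) (by omega)] at hu
        have hne : v (m-11) ≠ 0 := by rw [← W (m-11) (by omega) (by omega)]; exact h
        exact mul_left_cancel₀ hq35 (mul_right_cancel₀ hne (hu.trans hv.symm))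
      · -- u (m-10) ≠ 0, S10 at n = m-5
        have hu := hu10 (m - 5)
        have hv := hv10 (m - 5)
        simp only [show m-5+5 = m by ring, show m-5-5 = m-10 by ring,
          show m-5+3 = m-2 by ring, show m-5-3 = m-8 by ring,
          show m-5+2 = m-3 by ring, show m-5-2 = m-7 by ring,
          show m-5+1 = m-4 by ring, show m-5-1 = m-6 by ring,
          show m-11+1 = m-10 by ring] at hu hv h
        rw [W (m-2) (by omega) (by omega), W (m-8) (by omega) (by omega),
          W (m-3) (by omega) (by omega), W (m-7) (by omega) (by omega),
          W (m-4) (by omega) (by omega), W (m-6) (by omega) (by omega),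
          W (m-5) (by omega) (by omega),
          W (m-10) (by omega) (by omega)] at hu
        have hne : v (m-10) ≠ 0 := by rw [← W (m-10) (by omega) (by omega)]; exact h
        exact mul_left_cancel₀ hq4 (mul_right_cancel₀ hne (hu.trans hv.symm))
      · -- u (m-9) ≠ 0, S9 at n = m-5
        have hu := hu9 (m - 5)
        have hv := hv9 (m - 5)
        simp only [show m-5+5 = m by ring, show m-5-4 = m-9 by ring,
          show m-5+4 = m-1 by ring, show m-5-3 = m-8 by ring,
          show m-5+3 = m-2 by ring, show m-5-2 = m-7 by ring,
          show m-5+2 = m-3 by ring, show m-5-1 = m-6 by ring,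
          show m-5+1 = m-4 by ring, show m-11+2 = m-9 by ring] at hu hv h
        rw [W (m-1) (by omega) (by omega), W (m-8) (by omega) (by omega),
          W (m-2) (by omega) (by omega), W (m-7) (by omega) (by omega),
          W (m-3) (by omega) (by omega), W (m-6) (by omega) (by omega),
          W (m-4) (by omega) (by omega), W (m-5) (by omega) (by omega),
          W (m-9) (by omega) (by omega)] at hu
        have hne : v (m-9) ≠ 0 := by rw [← W (m-9) (by omega) (by omega)]; exact h
        exact mul_left_cancel₀ hq35 (mul_right_cancel₀ hne (hu.trans hv.symm))
      · -- u (m-8) ≠ 0, S8 at n = m-4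
        have hu := hu8 (m - 4)
        have hv := hv8 (m - 4)
        simp only [show m-4+4 = m by ring, show m-4-4 = m-8 by ring,
          show m-4+3 = m-1 by ring, show m-4-3 = m-7 by ring,
          show m-4+2 = m-2 by ring, show m-4-2 = m-6 by ring,
          show m-4+1 = m-3 by ring, show m-4-1 = m-5 by ring,
          show m-11+3 = m-8 by ring] at hu hv h
        rw [W (m-1) (by omega) (by omega), W (m-7) (by omega) (by omega),
          W (m-2) (by omega) (by omega), W (m-6) (by omega) (by omega),
          W (m-3) (by omega) (by omega), W (m-5) (by omega) (by omega),
          W (m-4) (by omega) (by omega),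
          W (m-8) (by omega) (by omega)] at hu
        have hne : v (m-8) ≠ 0 := by rw [← W (m-8) (by omega) (by omega)]; exact h
        exact mul_left_cancel₀ hq4 (mul_right_cancel₀ hne (hu.trans hv.symm))
  have down : ∀ k : ℕ, ∀ m : ℤ, -5 - (k:ℤ) ≤ m → m ≤ 6 → u m = v m := by
    intro k
    induction k with
    | zero => intro m h1 h2; exact base m (by omega) h2
    | succ k ih =>
      intro m h1 h2
      by_cases hm : -5 - (k:ℤ) ≤ m
      · exact ih m hm h2
      have hm7 : m = -6 - (k:ℤ) := by push_cast at h1 ⊢; omega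
      have W : ∀ j : ℤ, m + 1 ≤ j → j ≤ m + 11 → u j = v j := by
        intro j hj1 hj2; exact ih j (by omega) (by omega)
      rcases hfu (m + 8) with h | h | h | h
      · -- u (m+8) ≠ 0, S8 at n = m+4
        have hu := hu8 (m + 4)
        have hv := hv8 (m + 4)
        simp only [show m+4+4 = m+8 by ring, show m+4-4 = m by ring,
          show m+4+3 = m+7 by ring, show m+4-3 = m+1 by ring,
          show m+4+2 = m+6 by ring, show m+4-2 = m+2 by ring,
          show m+4+1 = m+5 by ring, show m+4-1 = m+3 by ring] at hu hv
        rw [W (m+7) (by omega) (by omega), W (m+1) (by omega) (by omega),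
          W (m+6) (by omega) (by omega), W (m+2) (by omega) (by omega),
          W (m+5) (by omega) (by omega), W (m+3) (by omega) (by omega),
          W (m+4) (by omega) (by omega),
          W (m+8) (by omega) (by omega)] at hu
        have hne : v (m+8) ≠ 0 := by rw [← W (m+8) (by omega) (by omega)]; exact h
        exact mul_left_cancel₀ (mul_ne_zero hq4 hne) (hu.trans hv.symm)
      · -- u (m+9) ≠ 0, S9 at n = m+4
        have hu := hu9 (m + 4)
        have hv := hv9 (m + 4)
        simp only [show m+4+5 = m+9 by ring, show m+4-4 = m by ring,
          show m+4+4 = m+8 by ring, show m+4-3 = m+1 by ring,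
          show m+4+3 = m+7 by ring, show m+4-2 = m+2 by ring,
          show m+4+2 = m+6 by ring, show m+4-1 = m+3 by ring,
          show m+4+1 = m+5 by ring, show m+8+1 = m+9 by ring] at hu hv h
        rw [W (m+8) (by omega) (by omega), W (m+1) (by omega) (by omega),
          W (m+7) (by omega) (by omega), W (m+2) (by omega) (by omega),
          W (m+6) (by omega) (by omega), W (m+3) (by omega) (by omega),
          W (m+5) (by omega) (by omega), W (m+4) (by omega) (by omega),
          W (m+9) (by omega) (by omega)] at hu
        have hne : v (m+9) ≠ 0 := by rw [← W (m+9) (by omega) (by omega)]; exact h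
        exact mul_left_cancel₀ (mul_ne_zero hq35 hne) (hu.trans hv.symm)
      · -- u (m+10) ≠ 0, S10 at n = m+5
        have hu := hu10 (m + 5)
        have hv := hv10 (m + 5)
        simp only [show m+5+5 = m+10 by ring, show m+5-5 = m by ring,
          show m+5+3 = m+8 by ring, show m+5-3 = m+2 by ring,
          show m+5+2 = m+7 by ring, show m+5-2 = m+3 by ring,
          show m+5+1 = m+6 by ring, show m+5-1 = m+4 by ring,
          show m+8+2 = m+10 by ring] at hu hv h
        rw [W (m+8) (by omega) (by omega), W (m+2) (by omega) (by omega),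
          W (m+7) (by omega) (by omega), W (m+3) (by omega) (by omega),
          W (m+6) (by omega) (by omega), W (m+4) (by omega) (by omega),
          W (m+5) (by omega) (by omega),
          W (m+10) (by omega) (by omega)] at hu
        have hne : v (m+10) ≠ 0 := by rw [← W (m+10) (by omega) (by omega)]; exact h
        exact mul_left_cancel₀ (mul_ne_zero hq4 hne) (hu.trans hv.symm)
      · -- u (m+11) ≠ 0, S11 at n = m+5
        have hu := hu11 (m + 5)
        have hv := hv11 (m + 5)
        simp only [show m+5+6 = m+11 by ring, show m+5-5 = m by ring,
          show m+5+4 = m+9 by ring, show m+5-3 = m+2 by ring,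
          show m+5+3 = m+8 by ring, show m+5-2 = m+3 by ring,
          show m+5+2 = m+7 by ring, show m+5-1 = m+4 by ring,
          show m+5+1 = m+6 by ring, show m+8+3 = m+11 by ring] at hu hv h
        rw [W (m+9) (by omega) (by omega), W (m+2) (by omega) (by omega),
          W (m+8) (by omega) (by omega), W (m+3) (by omega) (by omega),
          W (m+7) (by omega) (by omega), W (m+4) (by omega) (by omega),
          W (m+6) (by omega) (by omega), W (m+5) (by omega) (by omega),
          W (m+11) (by omega) (by omega)] at hu
        have hne : v (m+11) ≠ 0 := by rw [← W (m+11) (by omega) (by omega)]; exact h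
        exact mul_left_cancel₀ (mul_ne_zero hq35 hne) (hu.trans hv.symm)
  intro n
  by_cases hn : -5 ≤ n
  · exact up n.toNat n hn (by omega)
  · exact down (-n).toNat n (by omega) (by omega)


set_option maxHeartbeats 1000000 in
theorem stmt6 (p : ℕ) [Fact p.Prime] (hodd : Odd p)
    (c : ℤ → ZMod p)
    (hneg : ∀ n : ℤ, c (-n) = - c n)
    (h0 : c 0 = 0) (h1 : c 1 = 0) (h2 : c 2 = 1)
    (hS8 : ∀ n : ℤ, c 4 * c (n + 4) * c (n - 4) =
      c 3 * c 5 * c (n + 3) * c (n - 3)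
      + (c 4 ^ 3 - c 3 ^ 3 * c 5) * c (n + 2) * c (n - 2)
      + c 3 ^ 2 * c 6 * c (n + 1) * c (n - 1)
      - c 4 * c 6 * c n ^ 2)
    (hS9 : ∀ n : ℤ, c 3 * c 5 * c (n + 5) * c (n - 4) =
      c 3 ^ 2 * c 6 * c (n + 4) * c (n - 3)
      + c 4 * (c 5 ^ 2 - c 3 ^ 2 * c 6) * c (n + 3) * c (n - 2)
      + c 3 * c 4 * c 7 * c (n + 2) * c (n - 1)
      - c 5 * c 7 * c (n + 1) * c n)
    (hS10 : ∀ n : ℤ, c 4 * c (n + 5) * c (n - 5) =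
      c 4 * c 6 * c (n + 3) * c (n - 3)
      + c 4 * (c 5 ^ 2 - c 3 ^ 2 * c 6) * c (n + 2) * c (n - 2)
      + (c 3 ^ 3 * c 7 - c 8) * c (n + 1) * c (n - 1)
      - c 3 * c 4 * c 7 * c n ^ 2)
    (hS11 : ∀ n : ℤ, c 3 * c 5 * c (n + 6) * c (n - 5) =
      c 3 * c 4 * c 7 * c (n + 4) * c (n - 3)
      + (c 5 ^ 2 * c 6 - c 3 * c 4 ^ 2 * c 7) * c (n + 3) * c (n - 2)
      + c 3 * (c 3 * c 4 * c 8 - c 9) * c (n + 2) * c (n - 1)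
      - c 3 * c 5 * c 8 * c (n + 1) * c n)
    (h3 : c 3 ≠ 0) (h4 : c 4 ≠ 0) (h5 : c 5 ≠ 0) (h6 : c 6 ≠ 0) (h7 : c 7 ≠ 0)
    (h435 : c 4 ^ 3 - c 3 ^ 3 * c 5 ≠ 0)
    (hfour : ∀ m : ℤ, c m ≠ 0 ∨ c (m + 1) ≠ 0 ∨ c (m + 2) ≠ 0 ∨ c (m + 3) ≠ 0)
    (r : ℕ) (hrpos : 0 < r)
    (hr1 : c ((r : ℤ) - 1) = 0) (hr0 : c (r : ℤ) = 0) (hr2 : c ((r : ℤ) + 1) = 0)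
    (hr3 : c ((r : ℤ) + 3) ≠ 0)
    (α β : ZMod p)
    (hα : α = c ((r : ℤ) + 3) * (c 3 * c ((r : ℤ) + 2))⁻¹)
    (hβ : β = c 3 ^ 2 * c ((r : ℤ) + 2) ^ 3 * (c ((r : ℤ) + 3) ^ 2)⁻¹)
    :
    ∀ n : ℤ, c ((r : ℤ) + n) = α ^ n * β * c n := by
  have hb : c ((r:ℤ) + 3) ≠ 0 := hr3
  -- c (r+2) ≠ 0
  have ha : c ((r:ℤ) + 2) ≠ 0 := by
    rcases hfour ((r:ℤ) - 1) with h | h | h | h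
    · exact absurd hr1 h
    · rw [show (r:ℤ)-1+1 = (r:ℤ) by ring] at h; exact absurd hr0 h
    · rw [show (r:ℤ)-1+2 = (r:ℤ)+1 by ring] at h; exact absurd hr2 h
    · rw [show (r:ℤ)-1+3 = (r:ℤ)+2 by ring] at h; exact h
  have hX2ne : c ((r:ℤ) - 2) ≠ 0 := by
    rcases hfour ((r:ℤ) - 2) with h | h | h | h
    · exact h
    · rw [show (r:ℤ)-2+1 = (r:ℤ)-1 by ring] at h; exact absurd hr1 h
    · rw [show (r:ℤ)-2+2 = (r:ℤ) by ring] at h; exact absurd hr0 h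
    · rw [show (r:ℤ)-2+3 = (r:ℤ)+1 by ring] at h; exact absurd hr2 h
  have hα0 : α ≠ 0 := by
    rw [hα]; exact mul_ne_zero hr3 (inv_ne_zero (mul_ne_zero h3 ha))
  have hβ0 : β ≠ 0 := by
    rw [hβ]
    exact mul_ne_zero (mul_ne_zero (pow_ne_zero _ h3) (pow_ne_zero _ ha))
      (inv_ne_zero (pow_ne_zero _ hr3))
  -- clean relations near r
  have E5raw := hS8 ((r:ℤ) + 3)
  rw [show (r:ℤ)+3+4 = (r:ℤ)+7 by ring, show (r:ℤ)+3-4 = (r:ℤ)-1 by ring,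
    show (r:ℤ)+3+3 = (r:ℤ)+6 by ring, show (r:ℤ)+3-3 = (r:ℤ) by ring,
    show (r:ℤ)+3+2 = (r:ℤ)+5 by ring, show (r:ℤ)+3-2 = (r:ℤ)+1 by ring,
    show (r:ℤ)+3+1 = (r:ℤ)+4 by ring, show (r:ℤ)+3-1 = (r:ℤ)+2 by ring,
    hr1, hr0, hr2] at E5raw
  have F4 : c 3 ^ 2 * c ((r:ℤ)+2) * c ((r:ℤ)+4) = c 4 * c ((r:ℤ)+3) ^ 2 :=
    mul_left_cancel₀ h6 (by linear_combination -E5raw)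
  have E11raw := hS9 ((r:ℤ) + 3)
  rw [show (r:ℤ)+3+5 = (r:ℤ)+8 by ring, show (r:ℤ)+3-4 = (r:ℤ)-1 by ring,
    show (r:ℤ)+3+4 = (r:ℤ)+7 by ring, show (r:ℤ)+3-3 = (r:ℤ) by ring,
    show (r:ℤ)+3+3 = (r:ℤ)+6 by ring, show (r:ℤ)+3-2 = (r:ℤ)+1 by ring,
    show (r:ℤ)+3+2 = (r:ℤ)+5 by ring, show (r:ℤ)+3-1 = (r:ℤ)+2 by ring,
    show (r:ℤ)+3+1 = (r:ℤ)+4 by ring,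
    hr1, hr0, hr2] at E11raw
  have E11 : c 3 * c 4 * c ((r:ℤ)+2) * c ((r:ℤ)+5) = c 5 * c ((r:ℤ)+3) * c ((r:ℤ)+4) :=
    mul_left_cancel₀ h7 (by linear_combination -E11raw)
  have F5 : c 3 ^ 3 * c ((r:ℤ)+2) ^ 2 * c ((r:ℤ)+5) = c 5 * c ((r:ℤ)+3) ^ 3 :=
    mul_left_cancel₀ h4 (by linear_combination (c 3 ^ 2 * c ((r:ℤ)+2)) * E11
      + (c 5 * c ((r:ℤ)+3)) * F4)
  have E1raw := hS8 ((r:ℤ) + 1)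
  rw [show (r:ℤ)+1+4 = (r:ℤ)+5 by ring, show (r:ℤ)+1-4 = (r:ℤ)-3 by ring,
    show (r:ℤ)+1+3 = (r:ℤ)+4 by ring, show (r:ℤ)+1-3 = (r:ℤ)-2 by ring,
    show (r:ℤ)+1+2 = (r:ℤ)+3 by ring, show (r:ℤ)+1-2 = (r:ℤ)-1 by ring,
    show (r:ℤ)+1+1 = (r:ℤ)+2 by ring, show (r:ℤ)+1-1 = (r:ℤ) by ring,
    hr1, hr0, hr2] at E1raw
  have E1 : c 4 * c ((r:ℤ)+5) * c ((r:ℤ)-3) = c 3 * c 5 * c ((r:ℤ)+4) * c ((r:ℤ)-2) := by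
    linear_combination E1raw
  have E9raw := hS9 ((r:ℤ) + 1)
  rw [show (r:ℤ)+1+5 = (r:ℤ)+6 by ring, show (r:ℤ)+1-4 = (r:ℤ)-3 by ring,
    show (r:ℤ)+1+4 = (r:ℤ)+5 by ring, show (r:ℤ)+1-3 = (r:ℤ)-2 by ring,
    show (r:ℤ)+1+3 = (r:ℤ)+4 by ring, show (r:ℤ)+1-2 = (r:ℤ)-1 by ring,
    show (r:ℤ)+1+2 = (r:ℤ)+3 by ring, show (r:ℤ)+1-1 = (r:ℤ) by ring,
    show (r:ℤ)+1+1 = (r:ℤ)+2 by ring,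
    hr1, hr0, hr2] at E9raw
  have E9 : c 3 * c 5 * c ((r:ℤ)+6) * c ((r:ℤ)-3)
      = c 3 ^ 2 * c 6 * c ((r:ℤ)+5) * c ((r:ℤ)-2) := by
    linear_combination E9raw
  have E3raw := hS8 ((r:ℤ) + 2)
  rw [show (r:ℤ)+2+4 = (r:ℤ)+6 by ring, show (r:ℤ)+2-4 = (r:ℤ)-2 by ring,
    show (r:ℤ)+2+3 = (r:ℤ)+5 by ring, show (r:ℤ)+2-3 = (r:ℤ)-1 by ring,
    show (r:ℤ)+2+2 = (r:ℤ)+4 by ring, show (r:ℤ)+2-2 = (r:ℤ) by ring,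
    show (r:ℤ)+2+1 = (r:ℤ)+3 by ring, show (r:ℤ)+2-1 = (r:ℤ)+1 by ring,
    hr1, hr0, hr2] at E3raw
  have E3 : c ((r:ℤ)+6) * c ((r:ℤ)-2) = -(c 6 * c ((r:ℤ)+2) ^ 2) :=
    mul_left_cancel₀ h4 (by linear_combination E3raw)
  have E6raw := hS8 ((r:ℤ) - 3)
  rw [show (r:ℤ)-3+4 = (r:ℤ)+1 by ring, show (r:ℤ)-3-4 = (r:ℤ)-7 by ring,
    show (r:ℤ)-3+3 = (r:ℤ) by ring, show (r:ℤ)-3-3 = (r:ℤ)-6 by ring,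
    show (r:ℤ)-3+2 = (r:ℤ)-1 by ring, show (r:ℤ)-3-2 = (r:ℤ)-5 by ring,
    show (r:ℤ)-3+1 = (r:ℤ)-2 by ring, show (r:ℤ)-3-1 = (r:ℤ)-4 by ring,
    hr1, hr0, hr2] at E6raw
  have E6 : c 3 ^ 2 * c ((r:ℤ)-2) * c ((r:ℤ)-4) = c 4 * c ((r:ℤ)-3) ^ 2 :=
    mul_left_cancel₀ h6 (by linear_combination -E6raw)
  have E2raw := hS8 ((r:ℤ) - 1)
  rw [show (r:ℤ)-1+4 = (r:ℤ)+3 by ring, show (r:ℤ)-1-4 = (r:ℤ)-5 by ring,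
    show (r:ℤ)-1+3 = (r:ℤ)+2 by ring, show (r:ℤ)-1-3 = (r:ℤ)-4 by ring,
    show (r:ℤ)-1+2 = (r:ℤ)+1 by ring, show (r:ℤ)-1-2 = (r:ℤ)-3 by ring,
    show (r:ℤ)-1+1 = (r:ℤ) by ring, show (r:ℤ)-1-1 = (r:ℤ)-2 by ring,
    hr1, hr0, hr2] at E2raw
  have E2 : c 4 * c ((r:ℤ)+3) * c ((r:ℤ)-5) = c 3 * c 5 * c ((r:ℤ)+2) * c ((r:ℤ)-4) := by
    linear_combination E2raw
  -- nonvanishing of c(r+4), c(r-3)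
  have hY4ne : c ((r:ℤ)+4) ≠ 0 := by
    intro h
    apply mul_ne_zero h4 (pow_ne_zero 2 hb)
    rw [← F4, h, mul_zero]
  have hX3ne : c ((r:ℤ)-3) ≠ 0 := by
    intro h
    have h0' : c 3 * c 5 * c ((r:ℤ)+4) * c ((r:ℤ)-2) = 0 := by
      rw [← E1, h, mul_zero]
    exact (mul_ne_zero (mul_ne_zero (mul_ne_zero h3 h5) hY4ne) hX2ne) h0'
  -- closed forms
  have H1 : c 5 ^ 2 * c ((r:ℤ)+4) * c ((r:ℤ)+6) = c 4 * c 6 * c ((r:ℤ)+5) ^ 2 :=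
    mul_left_cancel₀ (mul_ne_zero h3 hX3ne)
      (by linear_combination (c 5 * c ((r:ℤ)+4)) * E9 - (c 3 * c 6 * c ((r:ℤ)+5)) * E1)
  have Kne1 : c 4 * c 5 ^ 2 * c ((r:ℤ)+3) ^ 2 * c 3 ^ 2 * c ((r:ℤ)+2) ≠ 0 :=
    mul_ne_zero (mul_ne_zero (mul_ne_zero (mul_ne_zero h4 (pow_ne_zero _ h5))
      (pow_ne_zero _ hb)) (pow_ne_zero _ h3)) ha
  have F6 : c 3 ^ 4 * c ((r:ℤ)+2) ^ 3 * c ((r:ℤ)+6) = c 6 * c ((r:ℤ)+3) ^ 4 :=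
    mul_left_cancel₀ Kne1 (by
      linear_combination (c 3 ^ 8 * c ((r:ℤ)+2) ^ 5) * H1
        - (c 5 ^ 2 * c ((r:ℤ)+6) * c 3 ^ 6 * c ((r:ℤ)+2) ^ 4) * F4
        + (c 4 * c 6 * c 3 ^ 2 * c ((r:ℤ)+2)
            * (c 3 ^ 3 * c ((r:ℤ)+2) ^ 2 * c ((r:ℤ)+5) + c 5 * c ((r:ℤ)+3) ^ 3)) * F5)
  have G2 : c ((r:ℤ)+3) ^ 4 * c ((r:ℤ)-2) = -(c 3 ^ 4 * c ((r:ℤ)+2) ^ 5) :=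
    mul_left_cancel₀ h6 (by
      linear_combination (c 3 ^ 4 * c ((r:ℤ)+2) ^ 3) * E3 - c ((r:ℤ)-2) * F6)
  have Kne2 : c 4 * c 5 * c 3 ^ 2 * c ((r:ℤ)+2) * c ((r:ℤ)+3) ^ 2 ≠ 0 :=
    mul_ne_zero (mul_ne_zero (mul_ne_zero (mul_ne_zero h4 h5) (pow_ne_zero _ h3)) ha)
      (pow_ne_zero _ hb)
  have G3 : c ((r:ℤ)+3) ^ 5 * c ((r:ℤ)-3) = -(c 3 ^ 6 * c ((r:ℤ)+2) ^ 6) :=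
    mul_left_cancel₀ Kne2 (by
      linear_combination (c 3 ^ 5 * c ((r:ℤ)+2) ^ 3 * c ((r:ℤ)+3) ^ 4) * E1
        - (c 3 ^ 2 * c ((r:ℤ)+2) * c ((r:ℤ)+3) ^ 4 * c 4 * c ((r:ℤ)-3)) * F5
        + (c 3 ^ 4 * c ((r:ℤ)+2) ^ 2 * c ((r:ℤ)+3) ^ 4 * c 5 * c ((r:ℤ)-2)) * F4
        + (c 3 ^ 4 * c ((r:ℤ)+2) ^ 2 * c 4 * c 5 * c ((r:ℤ)+3) ^ 2) * G2)
  have Kne3 : c 3 ^ 6 * c ((r:ℤ)+2) ^ 5 ≠ 0 :=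
    mul_ne_zero (pow_ne_zero _ h3) (pow_ne_zero _ ha)
  have G4 : c ((r:ℤ)+3) ^ 6 * c ((r:ℤ)-4) = -(c 4 * c 3 ^ 6 * c ((r:ℤ)+2) ^ 7) :=
    mul_left_cancel₀ Kne3 (by
      linear_combination -(c ((r:ℤ)+3) ^ 10) * E6
        + (c 3 ^ 2 * c ((r:ℤ)+3) ^ 6 * c ((r:ℤ)-4)) * G2
        - (c 4 * (c ((r:ℤ)+3) ^ 5 * c ((r:ℤ)-3) - c 3 ^ 6 * c ((r:ℤ)+2) ^ 6)) * G3)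
  have G5 : c ((r:ℤ)+3) ^ 7 * c ((r:ℤ)-5) = -(c 5 * c 3 ^ 7 * c ((r:ℤ)+2) ^ 8) :=
    mul_left_cancel₀ h4 (by
      linear_combination (c ((r:ℤ)+3) ^ 6) * E2 + (c 3 * c 5 * c ((r:ℤ)+2)) * G4)
  -- division forms
  have dY4 : c ((r:ℤ)+4) = c 4 * c ((r:ℤ)+3) ^ 2 / (c 3 ^ 2 * c ((r:ℤ)+2)) := by
    field_simp
    linear_combination F4
  have dY5 : c ((r:ℤ)+5) = c 5 * c ((r:ℤ)+3) ^ 3 / (c 3 ^ 3 * c ((r:ℤ)+2) ^ 2) := by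
    field_simp
    linear_combination F5
  have dY6 : c ((r:ℤ)+6) = c 6 * c ((r:ℤ)+3) ^ 4 / (c 3 ^ 4 * c ((r:ℤ)+2) ^ 3) := by
    field_simp
    linear_combination F6
  have dX2 : c ((r:ℤ)-2) = -(c 3 ^ 4 * c ((r:ℤ)+2) ^ 5 / c ((r:ℤ)+3) ^ 4) := by
    field_simp
    linear_combination G2
  have dX3 : c ((r:ℤ)-3) = -(c 3 ^ 6 * c ((r:ℤ)+2) ^ 6 / c ((r:ℤ)+3) ^ 5) := by
    field_simp
    linear_combination G3
  have dX4 : c ((r:ℤ)-4) = -(c 4 * c 3 ^ 6 * c ((r:ℤ)+2) ^ 7 / c ((r:ℤ)+3) ^ 6) := by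
    field_simp
    linear_combination G4
  have dX5 : c ((r:ℤ)-5) = -(c 5 * c 3 ^ 7 * c ((r:ℤ)+2) ^ 8 / c ((r:ℤ)+3) ^ 7) := by
    field_simp
    linear_combination G5
  -- base cases
  have base : ∀ m : ℤ, -5 ≤ m → m ≤ 6 → c ((r:ℤ) + m) = α ^ m * β * c m := by
    intro m hm1 hm2
    interval_cases m
    · rw [show (r:ℤ) + (-5) = (r:ℤ) - 5 by ring, show ((-5:ℤ)) = -(5:ℤ) by norm_num,
        hneg 5, dX5, hα, hβ, zpow_neg, show (5:ℤ) = ((5:ℕ):ℤ) by norm_num, zpow_natCast]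
      field_simp
    · rw [show (r:ℤ) + (-4) = (r:ℤ) - 4 by ring, show ((-4:ℤ)) = -(4:ℤ) by norm_num,
        hneg 4, dX4, hα, hβ, zpow_neg, show (4:ℤ) = ((4:ℕ):ℤ) by norm_num, zpow_natCast]
      field_simp
    · rw [show (r:ℤ) + (-3) = (r:ℤ) - 3 by ring, show ((-3:ℤ)) = -(3:ℤ) by norm_num,
        hneg 3, dX3, hα, hβ, zpow_neg, show (3:ℤ) = ((3:ℕ):ℤ) by norm_num, zpow_natCast]
      field_simp
    · rw [show (r:ℤ) + (-2) = (r:ℤ) - 2 by ring, show ((-2:ℤ)) = -(2:ℤ) by norm_num,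
        hneg 2, h2, dX2, hα, hβ, zpow_neg, show (2:ℤ) = ((2:ℕ):ℤ) by norm_num, zpow_natCast]
      field_simp
    · rw [show (r:ℤ) + (-1) = (r:ℤ) - 1 by ring, show ((-1:ℤ)) = -(1:ℤ) by norm_num,
        hneg 1, h1, hr1]
      ring
    · rw [show (r:ℤ) + 0 = (r:ℤ) by ring, hr0, h0]
      ring
    · rw [hr2, h1]
      ring
    · rw [hα, hβ, h2, show (2:ℤ) = ((2:ℕ):ℤ) by norm_num, zpow_natCast]
      field_simp
    · rw [hα, hβ, show (3:ℤ) = ((3:ℕ):ℤ) by norm_num, zpow_natCast]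
      field_simp
      ring_nf
      field_simp
    · rw [dY4, hα, hβ, show (4:ℤ) = ((4:ℕ):ℤ) by norm_num, zpow_natCast]
      field_simp
    · rw [dY5, hα, hβ, show (5:ℤ) = ((5:ℕ):ℤ) by norm_num, zpow_natCast]
      field_simp
    · rw [dY6, hα, hβ, show (6:ℤ) = ((6:ℕ):ℤ) by norm_num, zpow_natCast]
      field_simp
  -- the shifted sequence satisfies the recurrences
  have hu8 : ∀ n : ℤ, c 4 * c ((r:ℤ)+(n+4)) * c ((r:ℤ)+(n-4)) =
      c 3 * c 5 * c ((r:ℤ)+(n+3)) * c ((r:ℤ)+(n-3))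
      + (c 4 ^ 3 - c 3 ^ 3 * c 5) * c ((r:ℤ)+(n+2)) * c ((r:ℤ)+(n-2))
      + c 3 ^ 2 * c 6 * c ((r:ℤ)+(n+1)) * c ((r:ℤ)+(n-1))
      - c 4 * c 6 * c ((r:ℤ)+n) ^ 2 := by
    intro n
    have h := hS8 ((r:ℤ) + n)
    rw [show (r:ℤ)+n+4 = (r:ℤ)+(n+4) by ring, show (r:ℤ)+n-4 = (r:ℤ)+(n-4) by ring,
      show (r:ℤ)+n+3 = (r:ℤ)+(n+3) by ring, show (r:ℤ)+n-3 = (r:ℤ)+(n-3) by ring,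
      show (r:ℤ)+n+2 = (r:ℤ)+(n+2) by ring, show (r:ℤ)+n-2 = (r:ℤ)+(n-2) by ring,
      show (r:ℤ)+n+1 = (r:ℤ)+(n+1) by ring, show (r:ℤ)+n-1 = (r:ℤ)+(n-1) by ring] at h
    exact h
  have hu9 : ∀ n : ℤ, c 3 * c 5 * c ((r:ℤ)+(n+5)) * c ((r:ℤ)+(n-4)) =
      c 3 ^ 2 * c 6 * c ((r:ℤ)+(n+4)) * c ((r:ℤ)+(n-3))
      + c 4 * (c 5 ^ 2 - c 3 ^ 2 * c 6) * c ((r:ℤ)+(n+3)) * c ((r:ℤ)+(n-2))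
      + c 3 * c 4 * c 7 * c ((r:ℤ)+(n+2)) * c ((r:ℤ)+(n-1))
      - c 5 * c 7 * c ((r:ℤ)+(n+1)) * c ((r:ℤ)+n) := by
    intro n
    have h := hS9 ((r:ℤ) + n)
    rw [show (r:ℤ)+n+5 = (r:ℤ)+(n+5) by ring, show (r:ℤ)+n-4 = (r:ℤ)+(n-4) by ring,
      show (r:ℤ)+n+4 = (r:ℤ)+(n+4) by ring, show (r:ℤ)+n-3 = (r:ℤ)+(n-3) by ring,
      show (r:ℤ)+n+3 = (r:ℤ)+(n+3) by ring, show (r:ℤ)+n-2 = (r:ℤ)+(n-2) by ring,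
      show (r:ℤ)+n+2 = (r:ℤ)+(n+2) by ring, show (r:ℤ)+n-1 = (r:ℤ)+(n-1) by ring,
      show (r:ℤ)+n+1 = (r:ℤ)+(n+1) by ring] at h
    exact h
  have hu10 : ∀ n : ℤ, c 4 * c ((r:ℤ)+(n+5)) * c ((r:ℤ)+(n-5)) =
      c 4 * c 6 * c ((r:ℤ)+(n+3)) * c ((r:ℤ)+(n-3))
      + c 4 * (c 5 ^ 2 - c 3 ^ 2 * c 6) * c ((r:ℤ)+(n+2)) * c ((r:ℤ)+(n-2))
      + (c 3 ^ 3 * c 7 - c 8) * c ((r:ℤ)+(n+1)) * c ((r:ℤ)+(n-1))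
      - c 3 * c 4 * c 7 * c ((r:ℤ)+n) ^ 2 := by
    intro n
    have h := hS10 ((r:ℤ) + n)
    rw [show (r:ℤ)+n+5 = (r:ℤ)+(n+5) by ring, show (r:ℤ)+n-5 = (r:ℤ)+(n-5) by ring,
      show (r:ℤ)+n+3 = (r:ℤ)+(n+3) by ring, show (r:ℤ)+n-3 = (r:ℤ)+(n-3) by ring,
      show (r:ℤ)+n+2 = (r:ℤ)+(n+2) by ring, show (r:ℤ)+n-2 = (r:ℤ)+(n-2) by ring,
      show (r:ℤ)+n+1 = (r:ℤ)+(n+1) by ring, show (r:ℤ)+n-1 = (r:ℤ)+(n-1) by ring] at h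
    exact h
  have hu11 : ∀ n : ℤ, c 3 * c 5 * c ((r:ℤ)+(n+6)) * c ((r:ℤ)+(n-5)) =
      c 3 * c 4 * c 7 * c ((r:ℤ)+(n+4)) * c ((r:ℤ)+(n-3))
      + (c 5 ^ 2 * c 6 - c 3 * c 4 ^ 2 * c 7) * c ((r:ℤ)+(n+3)) * c ((r:ℤ)+(n-2))
      + c 3 * (c 3 * c 4 * c 8 - c 9) * c ((r:ℤ)+(n+2)) * c ((r:ℤ)+(n-1))
      - c 3 * c 5 * c 8 * c ((r:ℤ)+(n+1)) * c ((r:ℤ)+n) := by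
    intro n
    have h := hS11 ((r:ℤ) + n)
    rw [show (r:ℤ)+n+6 = (r:ℤ)+(n+6) by ring, show (r:ℤ)+n-5 = (r:ℤ)+(n-5) by ring,
      show (r:ℤ)+n+4 = (r:ℤ)+(n+4) by ring, show (r:ℤ)+n-3 = (r:ℤ)+(n-3) by ring,
      show (r:ℤ)+n+3 = (r:ℤ)+(n+3) by ring, show (r:ℤ)+n-2 = (r:ℤ)+(n-2) by ring,
      show (r:ℤ)+n+2 = (r:ℤ)+(n+2) by ring, show (r:ℤ)+n-1 = (r:ℤ)+(n-1) by ring,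
      show (r:ℤ)+n+1 = (r:ℤ)+(n+1) by ring] at h
    exact h
  -- the scaled sequence satisfies the recurrences
  have Epair : ∀ i j m : ℤ, i + j = m + m → α ^ i * α ^ j = α ^ m * α ^ m := by
    intro i j m h
    rw [← zpow_add₀ hα0, ← zpow_add₀ hα0, h]
  have Epair1 : ∀ i j m : ℤ, i + j = m + m + 1 → α ^ i * α ^ j = α ^ m * α ^ m * α := by
    intro i j m h
    rw [← zpow_add₀ hα0, h, zpow_add₀ hα0, zpow_add₀ hα0, zpow_one]
  have hv8 : ∀ n : ℤ, c 4 * (α ^ (n+4) * β * c (n+4)) * (α ^ (n-4) * β * c (n-4)) =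
      c 3 * c 5 * (α ^ (n+3) * β * c (n+3)) * (α ^ (n-3) * β * c (n-3))
      + (c 4 ^ 3 - c 3 ^ 3 * c 5) * (α ^ (n+2) * β * c (n+2)) * (α ^ (n-2) * β * c (n-2))
      + c 3 ^ 2 * c 6 * (α ^ (n+1) * β * c (n+1)) * (α ^ (n-1) * β * c (n-1))
      - c 4 * c 6 * (α ^ n * β * c n) ^ 2 := by
    intro n
    linear_combination (α ^ n * α ^ n * β ^ 2) * hS8 n
      + (c 4 * β ^ 2 * c (n+4) * c (n-4)) * Epair (n+4) (n-4) n (by ring)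
      - (c 3 * c 5 * β ^ 2 * c (n+3) * c (n-3)) * Epair (n+3) (n-3) n (by ring)
      - ((c 4 ^ 3 - c 3 ^ 3 * c 5) * β ^ 2 * c (n+2) * c (n-2)) * Epair (n+2) (n-2) n (by ring)
      - (c 3 ^ 2 * c 6 * β ^ 2 * c (n+1) * c (n-1)) * Epair (n+1) (n-1) n (by ring)
  have hv9 : ∀ n : ℤ, c 3 * c 5 * (α ^ (n+5) * β * c (n+5)) * (α ^ (n-4) * β * c (n-4)) =
      c 3 ^ 2 * c 6 * (α ^ (n+4) * β * c (n+4)) * (α ^ (n-3) * β * c (n-3))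
      + c 4 * (c 5 ^ 2 - c 3 ^ 2 * c 6) * (α ^ (n+3) * β * c (n+3)) * (α ^ (n-2) * β * c (n-2))
      + c 3 * c 4 * c 7 * (α ^ (n+2) * β * c (n+2)) * (α ^ (n-1) * β * c (n-1))
      - c 5 * c 7 * (α ^ (n+1) * β * c (n+1)) * (α ^ n * β * c n) := by
    intro n
    linear_combination (α ^ n * α ^ n * α * β ^ 2) * hS9 n
      + (c 3 * c 5 * β ^ 2 * c (n+5) * c (n-4)) * Epair1 (n+5) (n-4) n (by ring)
      - (c 3 ^ 2 * c 6 * β ^ 2 * c (n+4) * c (n-3)) * Epair1 (n+4) (n-3) n (by ring)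
      - (c 4 * (c 5 ^ 2 - c 3 ^ 2 * c 6) * β ^ 2 * c (n+3) * c (n-2)) * Epair1 (n+3) (n-2) n (by ring)
      - (c 3 * c 4 * c 7 * β ^ 2 * c (n+2) * c (n-1)) * Epair1 (n+2) (n-1) n (by ring)
      + (c 5 * c 7 * β ^ 2 * c (n+1) * c n) * Epair1 (n+1) n n (by ring)
  have hv10 : ∀ n : ℤ, c 4 * (α ^ (n+5) * β * c (n+5)) * (α ^ (n-5) * β * c (n-5)) =
      c 4 * c 6 * (α ^ (n+3) * β * c (n+3)) * (α ^ (n-3) * β * c (n-3))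
      + c 4 * (c 5 ^ 2 - c 3 ^ 2 * c 6) * (α ^ (n+2) * β * c (n+2)) * (α ^ (n-2) * β * c (n-2))
      + (c 3 ^ 3 * c 7 - c 8) * (α ^ (n+1) * β * c (n+1)) * (α ^ (n-1) * β * c (n-1))
      - c 3 * c 4 * c 7 * (α ^ n * β * c n) ^ 2 := by
    intro n
    linear_combination (α ^ n * α ^ n * β ^ 2) * hS10 n
      + (c 4 * β ^ 2 * c (n+5) * c (n-5)) * Epair (n+5) (n-5) n (by ring)
      - (c 4 * c 6 * β ^ 2 * c (n+3) * c (n-3)) * Epair (n+3) (n-3) n (by ring)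
      - (c 4 * (c 5 ^ 2 - c 3 ^ 2 * c 6) * β ^ 2 * c (n+2) * c (n-2)) * Epair (n+2) (n-2) n (by ring)
      - ((c 3 ^ 3 * c 7 - c 8) * β ^ 2 * c (n+1) * c (n-1)) * Epair (n+1) (n-1) n (by ring)
  have hv11 : ∀ n : ℤ, c 3 * c 5 * (α ^ (n+6) * β * c (n+6)) * (α ^ (n-5) * β * c (n-5)) =
      c 3 * c 4 * c 7 * (α ^ (n+4) * β * c (n+4)) * (α ^ (n-3) * β * c (n-3))
      + (c 5 ^ 2 * c 6 - c 3 * c 4 ^ 2 * c 7) * (α ^ (n+3) * β * c (n+3)) * (α ^ (n-2) * β * c (n-2))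
      + c 3 * (c 3 * c 4 * c 8 - c 9) * (α ^ (n+2) * β * c (n+2)) * (α ^ (n-1) * β * c (n-1))
      - c 3 * c 5 * c 8 * (α ^ (n+1) * β * c (n+1)) * (α ^ n * β * c n) := by
    intro n
    linear_combination (α ^ n * α ^ n * α * β ^ 2) * hS11 n
      + (c 3 * c 5 * β ^ 2 * c (n+6) * c (n-5)) * Epair1 (n+6) (n-5) n (by ring)
      - (c 3 * c 4 * c 7 * β ^ 2 * c (n+4) * c (n-3)) * Epair1 (n+4) (n-3) n (by ring)
      - ((c 5 ^ 2 * c 6 - c 3 * c 4 ^ 2 * c 7) * β ^ 2 * c (n+3) * c (n-2)) * Epair1 (n+3) (n-2) n (by ring)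
      - (c 3 * (c 3 * c 4 * c 8 - c 9) * β ^ 2 * c (n+2) * c (n-1)) * Epair1 (n+2) (n-1) n (by ring)
      + (c 3 * c 5 * c 8 * β ^ 2 * c (n+1) * c n) * Epair1 (n+1) n n (by ring)
  have hfu : ∀ m : ℤ, c ((r:ℤ)+m) ≠ 0 ∨ c ((r:ℤ)+(m+1)) ≠ 0 ∨ c ((r:ℤ)+(m+2)) ≠ 0
      ∨ c ((r:ℤ)+(m+3)) ≠ 0 := by
    intro m
    have h := hfour ((r:ℤ) + m)
    rw [show (r:ℤ)+m+1 = (r:ℤ)+(m+1) by ring, show (r:ℤ)+m+2 = (r:ℤ)+(m+2) by ring,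
      show (r:ℤ)+m+3 = (r:ℤ)+(m+3) by ring] at h
    exact h
  exact seq_ext (c 3) (c 4) (c 5) (c 6) (c 7) (c 8) (c 9) h4 (mul_ne_zero h3 h5)
    (fun x => c ((r:ℤ) + x)) (fun x => α ^ x * β * c x)
    hu8 hu9 hu10 hu11 hv8 hv9 hv10 hv11 hfu base
end

section
/- There exists a positive integer s with s ≤ p^11 such that c(n + s) = c(n) for all n ∈ ℤ; in particular, the sequence c is periodic. -/
/-!
Each of (S8)–(S11) has the form `A * c (n + k) * c (n - l) = F`, with `A ∈ {c 4, c 3 * c 5}`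
nonzero and `F` built from the terms strictly between `n - l` and `n + k`. Among the first (last)
four of eleven consecutive values one is nonzero, and one of the recurrences pairs it with the term
just after (before) the window, which is therefore determined. So eleven consecutive values
determine the sequence; as `ZMod p` admits only `p ^ 11` such windows, two of the windows starting
at `0, …, p ^ 11` coincide, and their distance is a period.
-/

open Set

theorem exists_shift_eqOn_Ico {R : Type*} [Fintype R] (u : ℤ → R) (L : ℕ) :
    ∃ s : ℕ, 0 < s ∧ s ≤ Fintype.card R ^ L ∧
      ∃ a : ℤ, EqOn u (fun n ↦ u (n + s)) (Ico a (a + L)) := by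
  obtain ⟨x, y, hxy, hf⟩ := Fintype.exists_ne_map_eq_of_card_lt
    (fun k : Fin (Fintype.card R ^ L + 1) ↦ fun j : Fin L ↦ u (k + j)) (by simp)
  wlog hlt : x < y generalizing x y
  · exact this y x hxy.symm hf.symm (hxy.symm.lt_of_le (not_lt.1 hlt))
  refine ⟨(y : ℕ) - x, by omega, by omega, x, fun n ⟨hxn, hnx⟩ ↦ ?_⟩
  obtain ⟨j, hj, rfl⟩ : ∃ j : ℕ, j < L ∧ n = x + j := ⟨(n - x).toNat, by omega, by omega⟩
  convert congrFun hf ⟨j, hj⟩ using 2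
  rw [Fin.val_mk, Nat.cast_sub hlt.le]
  ring

theorem eq_of_mul_mul_sub_eq_zero {R : Type*} [Ring R] [NoZeroDivisors R] {A a x y : R}
    (hA : A ≠ 0) (ha : a ≠ 0) (h : A * a * (x - y) = 0) : x = y :=
  sub_eq_zero.1 ((mul_eq_zero.1 h).resolve_left (mul_ne_zero hA ha))

variable {R : Type*} [CommRing R]

/-- The coefficients come from `e` rather than from `u`, so that shifting `u` preserves the
system. -/
structure SomosSystem (e u : ℤ → R) : Prop where
  s8 : ∀ n : ℤ, e 4 * u (n + 4) * u (n - 4) =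
      e 3 * e 5 * u (n + 3) * u (n - 3)
      + (e 4 ^ 3 - e 3 ^ 3 * e 5) * u (n + 2) * u (n - 2)
      + e 3 ^ 2 * e 6 * u (n + 1) * u (n - 1)
      - e 4 * e 6 * u n ^ 2
  s9 : ∀ n : ℤ, e 3 * e 5 * u (n + 5) * u (n - 4) =
      e 3 ^ 2 * e 6 * u (n + 4) * u (n - 3)
      + e 4 * (e 5 ^ 2 - e 3 ^ 2 * e 6) * u (n + 3) * u (n - 2)
      + e 3 * e 4 * e 7 * u (n + 2) * u (n - 1)
      - e 5 * e 7 * u (n + 1) * u n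
  s10 : ∀ n : ℤ, e 4 * u (n + 5) * u (n - 5) =
      e 4 * e 6 * u (n + 3) * u (n - 3)
      + e 4 * (e 5 ^ 2 - e 3 ^ 2 * e 6) * u (n + 2) * u (n - 2)
      + (e 3 ^ 3 * e 7 - e 8) * u (n + 1) * u (n - 1)
      - e 3 * e 4 * e 7 * u n ^ 2
  s11 : ∀ n : ℤ, e 3 * e 5 * u (n + 6) * u (n - 5) =
      e 3 * e 4 * e 7 * u (n + 4) * u (n - 3)
      + (e 5 ^ 2 * e 6 - e 3 * e 4 ^ 2 * e 7) * u (n + 3) * u (n - 2)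
      + e 3 * (e 3 * e 4 * e 8 - e 9) * u (n + 2) * u (n - 1)
      - e 3 * e 5 * e 8 * u (n + 1) * u n

namespace SomosSystem

variable {e u v : ℤ → R}

theorem comp_add_right (h : SomosSystem e u) (s : ℤ) : SomosSystem e (fun n ↦ u (n + s)) where
  s8 n := by simpa only [add_right_comm _ s, sub_add_eq_add_sub] using h.s8 (n + s)
  s9 n := by simpa only [add_right_comm _ s, sub_add_eq_add_sub] using h.s9 (n + s)
  s10 n := by simpa only [add_right_comm _ s, sub_add_eq_add_sub] using h.s10 (n + s)
  s11 n := by simpa only [add_right_comm _ s, sub_add_eq_add_sub] using h.s11 (n + s)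

variable [IsDomain R] (he3 : e 3 ≠ 0) (he4 : e 4 ≠ 0) (he5 : e 5 ≠ 0)
  (hu0 : ∀ m, u m ≠ 0 ∨ u (m + 1) ≠ 0 ∨ u (m + 2) ≠ 0 ∨ u (m + 3) ≠ 0)
  (hu : SomosSystem e u) (hv : SomosSystem e v)
include he3 he4 he5 hu0 hu hv

theorem eq_add_eleven_of_eqOn {m : ℤ} (h : EqOn u v (Ico m (m + 11))) :
    u (m + 11) = v (m + 11) := by
  rcases hu0 m with ha | ha | ha | ha
  · refine eq_of_mul_mul_sub_eq_zero (mul_ne_zero he3 he5) ha ?_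
    linear_combination (norm := (simp (disch := (rw [mem_Ico]; omega)) only [h.symm _]; ring_nf))
      hu.s11 (m + 5) - hv.s11 (m + 5)
  · refine eq_of_mul_mul_sub_eq_zero he4 ha ?_
    linear_combination (norm := (simp (disch := (rw [mem_Ico]; omega)) only [h.symm _]; ring_nf))
      hu.s10 (m + 6) - hv.s10 (m + 6)
  · refine eq_of_mul_mul_sub_eq_zero (mul_ne_zero he3 he5) ha ?_
    linear_combination (norm := (simp (disch := (rw [mem_Ico]; omega)) only [h.symm _]; ring_nf))
      hu.s9 (m + 6) - hv.s9 (m + 6)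
  · refine eq_of_mul_mul_sub_eq_zero he4 ha ?_
    linear_combination (norm := (simp (disch := (rw [mem_Ico]; omega)) only [h.symm _]; ring_nf))
      hu.s8 (m + 7) - hv.s8 (m + 7)

theorem eq_sub_one_of_eqOn {m : ℤ} (h : EqOn u v (Ico m (m + 11))) :
    u (m - 1) = v (m - 1) := by
  rcases hu0 (m + 7) with ha | ha | ha | ha
  · refine eq_of_mul_mul_sub_eq_zero he4 ha ?_
    linear_combination (norm := (simp (disch := (rw [mem_Ico]; omega)) only [h.symm _]; ring_nf))
      hu.s8 (m + 3) - hv.s8 (m + 3)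
  · refine eq_of_mul_mul_sub_eq_zero (mul_ne_zero he3 he5) ha ?_
    linear_combination (norm := (simp (disch := (rw [mem_Ico]; omega)) only [h.symm _]; ring_nf))
      hu.s9 (m + 3) - hv.s9 (m + 3)
  · refine eq_of_mul_mul_sub_eq_zero he4 ha ?_
    linear_combination (norm := (simp (disch := (rw [mem_Ico]; omega)) only [h.symm _]; ring_nf))
      hu.s10 (m + 4) - hv.s10 (m + 4)
  · refine eq_of_mul_mul_sub_eq_zero (mul_ne_zero he3 he5) ha ?_
    linear_combination (norm := (simp (disch := (rw [mem_Ico]; omega)) only [h.symm _]; ring_nf))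
      hu.s11 (m + 4) - hv.s11 (m + 4)

theorem eq_of_eqOn_Ico {m : ℤ} (h : EqOn u v (Ico m (m + 11))) : u = v := by
  have hgrow : ∀ k : ℕ, EqOn u v (Ico (m - k) (m + 11 + k)) := by
    intro k
    induction k with
    | zero => simpa using h
    | succ k ih =>
      intro x ⟨hx1, hx2⟩
      rcases (show x = m - k - 1 ∨ x ∈ Ico (m - k) (m + 11 + k) ∨ x = m + k + 11 by
        rw [mem_Ico]; omega) with rfl | hx | rfl
      · exact eq_sub_one_of_eqOn he3 he4 he5 hu0 hu hv
          (ih.mono (Ico_subset_Ico le_rfl (by omega)))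
      · exact ih hx
      · exact eq_add_eleven_of_eqOn he3 he4 he5 hu0 hu hv
          (ih.mono (Ico_subset_Ico (by omega) (by omega)))
  funext n
  exact hgrow (n - m).natAbs ⟨by omega, by omega⟩

end SomosSystem

theorem stmt8_general (p : ℕ) [Fact p.Prime]
    (c : ℤ → ZMod p)
    (hS8 : ∀ n : ℤ, c 4 * c (n + 4) * c (n - 4) =
      c 3 * c 5 * c (n + 3) * c (n - 3)
      + (c 4 ^ 3 - c 3 ^ 3 * c 5) * c (n + 2) * c (n - 2)
      + c 3 ^ 2 * c 6 * c (n + 1) * c (n - 1)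
      - c 4 * c 6 * c n ^ 2)
    (hS9 : ∀ n : ℤ, c 3 * c 5 * c (n + 5) * c (n - 4) =
      c 3 ^ 2 * c 6 * c (n + 4) * c (n - 3)
      + c 4 * (c 5 ^ 2 - c 3 ^ 2 * c 6) * c (n + 3) * c (n - 2)
      + c 3 * c 4 * c 7 * c (n + 2) * c (n - 1)
      - c 5 * c 7 * c (n + 1) * c n)
    (hS10 : ∀ n : ℤ, c 4 * c (n + 5) * c (n - 5) =
      c 4 * c 6 * c (n + 3) * c (n - 3)
      + c 4 * (c 5 ^ 2 - c 3 ^ 2 * c 6) * c (n + 2) * c (n - 2)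
      + (c 3 ^ 3 * c 7 - c 8) * c (n + 1) * c (n - 1)
      - c 3 * c 4 * c 7 * c n ^ 2)
    (hS11 : ∀ n : ℤ, c 3 * c 5 * c (n + 6) * c (n - 5) =
      c 3 * c 4 * c 7 * c (n + 4) * c (n - 3)
      + (c 5 ^ 2 * c 6 - c 3 * c 4 ^ 2 * c 7) * c (n + 3) * c (n - 2)
      + c 3 * (c 3 * c 4 * c 8 - c 9) * c (n + 2) * c (n - 1)
      - c 3 * c 5 * c 8 * c (n + 1) * c n)
    (h3 : c 3 ≠ 0) (h4 : c 4 ≠ 0) (h5 : c 5 ≠ 0)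
    (hfour : ∀ m : ℤ, c m ≠ 0 ∨ c (m + 1) ≠ 0 ∨ c (m + 2) ≠ 0 ∨ c (m + 3) ≠ 0)
    :
    ∃ s : ℕ, 0 < s ∧ s ≤ p ^ 11 ∧ ∀ n : ℤ, c (n + (s : ℤ)) = c n := by
  have hc : SomosSystem c c := ⟨hS8, hS9, hS10, hS11⟩
  obtain ⟨s, hs, hsp, a, ha⟩ := exists_shift_eqOn_Ico c 11
  rw [ZMod.card] at hsp
  have hperiodic := hc.eq_of_eqOn_Ico h3 h4 h5 hfour (hc.comp_add_right s) ha
  exact ⟨s, hs, hsp, fun n ↦ (congrFun hperiodic n).symm⟩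

theorem stmt8 (p : ℕ) [Fact p.Prime] (hodd : Odd p)
    (c : ℤ → ZMod p)
    (hneg : ∀ n : ℤ, c (-n) = - c n)
    (h0 : c 0 = 0) (h1 : c 1 = 0) (h2 : c 2 = 1)
    (hS8 : ∀ n : ℤ, c 4 * c (n + 4) * c (n - 4) =
      c 3 * c 5 * c (n + 3) * c (n - 3)
      + (c 4 ^ 3 - c 3 ^ 3 * c 5) * c (n + 2) * c (n - 2)
      + c 3 ^ 2 * c 6 * c (n + 1) * c (n - 1)
      - c 4 * c 6 * c n ^ 2)
    (hS9 : ∀ n : ℤ, c 3 * c 5 * c (n + 5) * c (n - 4) =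
      c 3 ^ 2 * c 6 * c (n + 4) * c (n - 3)
      + c 4 * (c 5 ^ 2 - c 3 ^ 2 * c 6) * c (n + 3) * c (n - 2)
      + c 3 * c 4 * c 7 * c (n + 2) * c (n - 1)
      - c 5 * c 7 * c (n + 1) * c n)
    (hS10 : ∀ n : ℤ, c 4 * c (n + 5) * c (n - 5) =
      c 4 * c 6 * c (n + 3) * c (n - 3)
      + c 4 * (c 5 ^ 2 - c 3 ^ 2 * c 6) * c (n + 2) * c (n - 2)
      + (c 3 ^ 3 * c 7 - c 8) * c (n + 1) * c (n - 1)
      - c 3 * c 4 * c 7 * c n ^ 2)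
    (hS11 : ∀ n : ℤ, c 3 * c 5 * c (n + 6) * c (n - 5) =
      c 3 * c 4 * c 7 * c (n + 4) * c (n - 3)
      + (c 5 ^ 2 * c 6 - c 3 * c 4 ^ 2 * c 7) * c (n + 3) * c (n - 2)
      + c 3 * (c 3 * c 4 * c 8 - c 9) * c (n + 2) * c (n - 1)
      - c 3 * c 5 * c 8 * c (n + 1) * c n)
    (h3 : c 3 ≠ 0) (h4 : c 4 ≠ 0) (h5 : c 5 ≠ 0)
    (hfour : ∀ m : ℤ, c m ≠ 0 ∨ c (m + 1) ≠ 0 ∨ c (m + 2) ≠ 0 ∨ c (m + 3) ≠ 0)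
    :
    ∃ s : ℕ, 0 < s ∧ s ≤ p ^ 11 ∧ ∀ n : ℤ, c (n + (s : ℤ)) = c n :=
  stmt8_general p c hS8 hS9 hS10 hS11 h3 h4 h5 hfour
end

section
/- Let c' : ℤ → ZMod p be another sequence satisfying conditions (i), (ii), (iii) (with the coefficients in its recurrences given by its own values c'(3), ..., c'(9)). If c(n) = c'(n) for every integer n with 3 ≤ n ≤ 10, then c(n) = c'(n) for all n ∈ ℤ. -/
/-!
Shifted so that its top index is j, the relation S_k (k = 8, ..., 11) expresses
a * c j * c (j - k), with a = c 4 or c 3 * c 5, as a polynomial in c 3, ..., c 9 and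
c (j - k + 1), ..., c (j - 1). Since one of c (j - 11), ..., c (j - 8) is nonzero, one of the four
relations determines c j from the earlier terms, so two solutions agreeing on 0, ..., 10 agree on
all n ≥ 0 by strong induction, and then everywhere by oddness.
-/

section Somos

variable {R : Type*} [CommRing R]

def SomosRelation8 (c : ℤ → R) : Prop :=
  ∀ n : ℤ, c 4 * c (n + 4) * c (n - 4) =
    c 3 * c 5 * c (n + 3) * c (n - 3)
    + (c 4 ^ 3 - c 3 ^ 3 * c 5) * c (n + 2) * c (n - 2)
    + c 3 ^ 2 * c 6 * c (n + 1) * c (n - 1)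
    - c 4 * c 6 * c n ^ 2

def SomosRelation9 (c : ℤ → R) : Prop :=
  ∀ n : ℤ, c 3 * c 5 * c (n + 5) * c (n - 4) =
    c 3 ^ 2 * c 6 * c (n + 4) * c (n - 3)
    + c 4 * (c 5 ^ 2 - c 3 ^ 2 * c 6) * c (n + 3) * c (n - 2)
    + c 3 * c 4 * c 7 * c (n + 2) * c (n - 1)
    - c 5 * c 7 * c (n + 1) * c n

def SomosRelation10 (c : ℤ → R) : Prop :=
  ∀ n : ℤ, c 4 * c (n + 5) * c (n - 5) =
    c 4 * c 6 * c (n + 3) * c (n - 3)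
    + c 4 * (c 5 ^ 2 - c 3 ^ 2 * c 6) * c (n + 2) * c (n - 2)
    + (c 3 ^ 3 * c 7 - c 8) * c (n + 1) * c (n - 1)
    - c 3 * c 4 * c 7 * c n ^ 2

def SomosRelation11 (c : ℤ → R) : Prop :=
  ∀ n : ℤ, c 3 * c 5 * c (n + 6) * c (n - 5) =
    c 3 * c 4 * c 7 * c (n + 4) * c (n - 3)
    + (c 5 ^ 2 * c 6 - c 3 * c 4 ^ 2 * c 7) * c (n + 3) * c (n - 2)
    + c 3 * (c 3 * c 4 * c 8 - c 9) * c (n + 2) * c (n - 1)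
    - c 3 * c 5 * c 8 * c (n + 1) * c n

structure SomosRelations (c : ℤ → R) : Prop where
  s8 : SomosRelation8 c
  s9 : SomosRelation9 c
  s10 : SomosRelation10 c
  s11 : SomosRelation11 c

variable [NoZeroDivisors R] {c c' : ℤ → R} {j : ℤ}

theorem SomosRelation8.apply_eq (hc : SomosRelation8 c) (hc' : SomosRelation8 c')
    (hcoef : ∀ k, 3 ≤ k → k ≤ 6 → c k = c' k) (hwin : ∀ k, j - 8 ≤ k → k < j → c k = c' k)
    (h4 : c 4 ≠ 0) (hlead : c (j - 8) ≠ 0) : c j = c' j := by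
  have e := hc (j - 4)
  have e' := hc' (j - 4)
  simp (disch := omega) only [← hcoef, ← hwin] at e'
  rw [show j - 4 + 4 = j by ring, show j - 4 - 4 = j - 8 by ring] at e e'
  refine mul_left_cancel₀ (mul_ne_zero h4 hlead) ?_
  linear_combination e - e'

theorem SomosRelation9.apply_eq (hc : SomosRelation9 c) (hc' : SomosRelation9 c')
    (hcoef : ∀ k, 3 ≤ k → k ≤ 7 → c k = c' k) (hwin : ∀ k, j - 9 ≤ k → k < j → c k = c' k)
    (h3 : c 3 ≠ 0) (h5 : c 5 ≠ 0) (hlead : c (j - 9) ≠ 0) : c j = c' j := by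
  have e := hc (j - 5)
  have e' := hc' (j - 5)
  simp (disch := omega) only [← hcoef, ← hwin] at e'
  rw [show j - 5 + 5 = j by ring, show j - 5 - 4 = j - 9 by ring] at e e'
  refine mul_left_cancel₀ (mul_ne_zero (mul_ne_zero h3 h5) hlead) ?_
  linear_combination e - e'

theorem SomosRelation10.apply_eq (hc : SomosRelation10 c) (hc' : SomosRelation10 c')
    (hcoef : ∀ k, 3 ≤ k → k ≤ 8 → c k = c' k) (hwin : ∀ k, j - 10 ≤ k → k < j → c k = c' k)
    (h4 : c 4 ≠ 0) (hlead : c (j - 10) ≠ 0) : c j = c' j := by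
  have e := hc (j - 5)
  have e' := hc' (j - 5)
  simp (disch := omega) only [← hcoef, ← hwin] at e'
  rw [show j - 5 + 5 = j by ring, show j - 5 - 5 = j - 10 by ring] at e e'
  refine mul_left_cancel₀ (mul_ne_zero h4 hlead) ?_
  linear_combination e - e'

theorem SomosRelation11.apply_eq (hc : SomosRelation11 c) (hc' : SomosRelation11 c')
    (hcoef : ∀ k, 3 ≤ k → k ≤ 9 → c k = c' k) (hwin : ∀ k, j - 11 ≤ k → k < j → c k = c' k)
    (h3 : c 3 ≠ 0) (h5 : c 5 ≠ 0) (hlead : c (j - 11) ≠ 0) : c j = c' j := by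
  have e := hc (j - 6)
  have e' := hc' (j - 6)
  simp (disch := omega) only [← hcoef, ← hwin] at e'
  rw [show j - 6 + 6 = j by ring, show j - 6 - 5 = j - 11 by ring] at e e'
  refine mul_left_cancel₀ (mul_ne_zero (mul_ne_zero h3 h5) hlead) ?_
  linear_combination e - e'

variable (hc : SomosRelations c) (hc' : SomosRelations c')
  (h3 : c 3 ≠ 0) (h4 : c 4 ≠ 0) (h5 : c 5 ≠ 0)
  (hfour : ∀ m : ℤ, c m ≠ 0 ∨ c (m + 1) ≠ 0 ∨ c (m + 2) ≠ 0 ∨ c (m + 3) ≠ 0)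
include hc hc' h3 h4 h5 hfour

theorem SomosRelations.apply_eq_of_eqOn_Ico (hj : 11 ≤ j)
    (hagree : ∀ k, 0 ≤ k → k < j → c k = c' k) : c j = c' j := by
  have below (i : ℤ) (hi : j - 11 ≤ i) (hij : i < j) : c i = c' i := hagree i (by omega) hij
  have coef (i : ℤ) (hi : 3 ≤ i) (hi' : i ≤ 9) : c i = c' i := hagree i (by omega) (by omega)
  rcases hfour (j - 11) with h | h | h | h
  · exact hc.s11.apply_eq hc'.s11 coef below h3 h5 h
  · rw [show j - 11 + 1 = j - 10 by ring] at h
    exact hc.s10.apply_eq hc'.s10 (fun i hi hi' => coef i hi (by omega))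
      (fun i hi => below i (by omega)) h4 h
  · rw [show j - 11 + 2 = j - 9 by ring] at h
    exact hc.s9.apply_eq hc'.s9 (fun i hi hi' => coef i hi (by omega))
      (fun i hi => below i (by omega)) h3 h5 h
  · rw [show j - 11 + 3 = j - 8 by ring] at h
    exact hc.s8.apply_eq hc'.s8 (fun i hi hi' => coef i hi (by omega))
      (fun i hi => below i (by omega)) h4 h

theorem SomosRelations.eq_of_nonneg (hbase : ∀ k, 0 ≤ k → k ≤ 10 → c k = c' k) {n : ℤ}
    (hn : 0 ≤ n) : c n = c' n := by
  lift n to ℕ using hn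
  induction n using Nat.strong_induction_on with
  | _ n ih =>
    rcases le_or_gt n 10 with hn | hn
    · exact hbase n (by positivity) (by exact_mod_cast hn)
    · refine hc.apply_eq_of_eqOn_Ico hc' h3 h4 h5 hfour (by omega) fun k hk hkn => ?_
      lift k to ℕ using hk
      exact ih k (by exact_mod_cast hkn)

end Somos

theorem stmt9_general (p : ℕ) [Fact p.Prime]
    (c : ℤ → ZMod p)
    (hneg : ∀ n : ℤ, c (-n) = - c n)
    (h0 : c 0 = 0) (h1 : c 1 = 0) (h2 : c 2 = 1)
    (hS8 : ∀ n : ℤ, c 4 * c (n + 4) * c (n - 4) =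
      c 3 * c 5 * c (n + 3) * c (n - 3)
      + (c 4 ^ 3 - c 3 ^ 3 * c 5) * c (n + 2) * c (n - 2)
      + c 3 ^ 2 * c 6 * c (n + 1) * c (n - 1)
      - c 4 * c 6 * c n ^ 2)
    (hS9 : ∀ n : ℤ, c 3 * c 5 * c (n + 5) * c (n - 4) =
      c 3 ^ 2 * c 6 * c (n + 4) * c (n - 3)
      + c 4 * (c 5 ^ 2 - c 3 ^ 2 * c 6) * c (n + 3) * c (n - 2)
      + c 3 * c 4 * c 7 * c (n + 2) * c (n - 1)
      - c 5 * c 7 * c (n + 1) * c n)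
    (hS10 : ∀ n : ℤ, c 4 * c (n + 5) * c (n - 5) =
      c 4 * c 6 * c (n + 3) * c (n - 3)
      + c 4 * (c 5 ^ 2 - c 3 ^ 2 * c 6) * c (n + 2) * c (n - 2)
      + (c 3 ^ 3 * c 7 - c 8) * c (n + 1) * c (n - 1)
      - c 3 * c 4 * c 7 * c n ^ 2)
    (hS11 : ∀ n : ℤ, c 3 * c 5 * c (n + 6) * c (n - 5) =
      c 3 * c 4 * c 7 * c (n + 4) * c (n - 3)
      + (c 5 ^ 2 * c 6 - c 3 * c 4 ^ 2 * c 7) * c (n + 3) * c (n - 2)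
      + c 3 * (c 3 * c 4 * c 8 - c 9) * c (n + 2) * c (n - 1)
      - c 3 * c 5 * c 8 * c (n + 1) * c n)
    (h3 : c 3 ≠ 0) (h4 : c 4 ≠ 0) (h5 : c 5 ≠ 0)
    (hfour : ∀ m : ℤ, c m ≠ 0 ∨ c (m + 1) ≠ 0 ∨ c (m + 2) ≠ 0 ∨ c (m + 3) ≠ 0)
    (c' : ℤ → ZMod p)
    (hneg' : ∀ n : ℤ, c' (-n) = - c' n)
    (h0' : c' 0 = 0) (h1' : c' 1 = 0) (h2' : c' 2 = 1)
    (hS8' : ∀ n : ℤ, c' 4 * c' (n + 4) * c' (n - 4) =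
      c' 3 * c' 5 * c' (n + 3) * c' (n - 3)
      + (c' 4 ^ 3 - c' 3 ^ 3 * c' 5) * c' (n + 2) * c' (n - 2)
      + c' 3 ^ 2 * c' 6 * c' (n + 1) * c' (n - 1)
      - c' 4 * c' 6 * c' n ^ 2)
    (hS9' : ∀ n : ℤ, c' 3 * c' 5 * c' (n + 5) * c' (n - 4) =
      c' 3 ^ 2 * c' 6 * c' (n + 4) * c' (n - 3)
      + c' 4 * (c' 5 ^ 2 - c' 3 ^ 2 * c' 6) * c' (n + 3) * c' (n - 2)
      + c' 3 * c' 4 * c' 7 * c' (n + 2) * c' (n - 1)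
      - c' 5 * c' 7 * c' (n + 1) * c' n)
    (hS10' : ∀ n : ℤ, c' 4 * c' (n + 5) * c' (n - 5) =
      c' 4 * c' 6 * c' (n + 3) * c' (n - 3)
      + c' 4 * (c' 5 ^ 2 - c' 3 ^ 2 * c' 6) * c' (n + 2) * c' (n - 2)
      + (c' 3 ^ 3 * c' 7 - c' 8) * c' (n + 1) * c' (n - 1)
      - c' 3 * c' 4 * c' 7 * c' n ^ 2)
    (hS11' : ∀ n : ℤ, c' 3 * c' 5 * c' (n + 6) * c' (n - 5) =
      c' 3 * c' 4 * c' 7 * c' (n + 4) * c' (n - 3)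
      + (c' 5 ^ 2 * c' 6 - c' 3 * c' 4 ^ 2 * c' 7) * c' (n + 3) * c' (n - 2)
      + c' 3 * (c' 3 * c' 4 * c' 8 - c' 9) * c' (n + 2) * c' (n - 1)
      - c' 3 * c' 5 * c' 8 * c' (n + 1) * c' n)
    (heq : ∀ n : ℤ, 3 ≤ n → n ≤ 10 → c n = c' n) :
    ∀ n : ℤ, c n = c' n := by
  have hbase (k : ℤ) (hk : 0 ≤ k) (hk' : k ≤ 10) : c k = c' k := by
    obtain rfl | rfl | rfl | hk3 : k = 0 ∨ k = 1 ∨ k = 2 ∨ 3 ≤ k := by omega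
    · rw [h0, h0']
    · rw [h1, h1']
    · rw [h2, h2']
    · exact heq k hk3 hk'
  have hnonneg (n : ℤ) (hn : 0 ≤ n) : c n = c' n :=
    SomosRelations.eq_of_nonneg ⟨hS8, hS9, hS10, hS11⟩ ⟨hS8', hS9', hS10', hS11'⟩
      h3 h4 h5 hfour hbase hn
  intro n
  rcases le_or_gt 0 n with hn | hn
  · exact hnonneg n hn
  · rw [← neg_neg n, hneg, hneg', hnonneg (-n) (by omega)]

theorem stmt9 (p : ℕ) [Fact p.Prime] (hodd : Odd p)
    (c : ℤ → ZMod p)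
    (hneg : ∀ n : ℤ, c (-n) = - c n)
    (h0 : c 0 = 0) (h1 : c 1 = 0) (h2 : c 2 = 1)
    (hS8 : ∀ n : ℤ, c 4 * c (n + 4) * c (n - 4) =
      c 3 * c 5 * c (n + 3) * c (n - 3)
      + (c 4 ^ 3 - c 3 ^ 3 * c 5) * c (n + 2) * c (n - 2)
      + c 3 ^ 2 * c 6 * c (n + 1) * c (n - 1)
      - c 4 * c 6 * c n ^ 2)
    (hS9 : ∀ n : ℤ, c 3 * c 5 * c (n + 5) * c (n - 4) =
      c 3 ^ 2 * c 6 * c (n + 4) * c (n - 3)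
      + c 4 * (c 5 ^ 2 - c 3 ^ 2 * c 6) * c (n + 3) * c (n - 2)
      + c 3 * c 4 * c 7 * c (n + 2) * c (n - 1)
      - c 5 * c 7 * c (n + 1) * c n)
    (hS10 : ∀ n : ℤ, c 4 * c (n + 5) * c (n - 5) =
      c 4 * c 6 * c (n + 3) * c (n - 3)
      + c 4 * (c 5 ^ 2 - c 3 ^ 2 * c 6) * c (n + 2) * c (n - 2)
      + (c 3 ^ 3 * c 7 - c 8) * c (n + 1) * c (n - 1)
      - c 3 * c 4 * c 7 * c n ^ 2)
    (hS11 : ∀ n : ℤ, c 3 * c 5 * c (n + 6) * c (n - 5) =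
      c 3 * c 4 * c 7 * c (n + 4) * c (n - 3)
      + (c 5 ^ 2 * c 6 - c 3 * c 4 ^ 2 * c 7) * c (n + 3) * c (n - 2)
      + c 3 * (c 3 * c 4 * c 8 - c 9) * c (n + 2) * c (n - 1)
      - c 3 * c 5 * c 8 * c (n + 1) * c n)
    (h3 : c 3 ≠ 0) (h4 : c 4 ≠ 0) (h5 : c 5 ≠ 0)
    (hfour : ∀ m : ℤ, c m ≠ 0 ∨ c (m + 1) ≠ 0 ∨ c (m + 2) ≠ 0 ∨ c (m + 3) ≠ 0)
    (c' : ℤ → ZMod p)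
    (hneg' : ∀ n : ℤ, c' (-n) = - c' n)
    (h0' : c' 0 = 0) (h1' : c' 1 = 0) (h2' : c' 2 = 1)
    (hS8' : ∀ n : ℤ, c' 4 * c' (n + 4) * c' (n - 4) =
      c' 3 * c' 5 * c' (n + 3) * c' (n - 3)
      + (c' 4 ^ 3 - c' 3 ^ 3 * c' 5) * c' (n + 2) * c' (n - 2)
      + c' 3 ^ 2 * c' 6 * c' (n + 1) * c' (n - 1)
      - c' 4 * c' 6 * c' n ^ 2)
    (hS9' : ∀ n : ℤ, c' 3 * c' 5 * c' (n + 5) * c' (n - 4) =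
      c' 3 ^ 2 * c' 6 * c' (n + 4) * c' (n - 3)
      + c' 4 * (c' 5 ^ 2 - c' 3 ^ 2 * c' 6) * c' (n + 3) * c' (n - 2)
      + c' 3 * c' 4 * c' 7 * c' (n + 2) * c' (n - 1)
      - c' 5 * c' 7 * c' (n + 1) * c' n)
    (hS10' : ∀ n : ℤ, c' 4 * c' (n + 5) * c' (n - 5) =
      c' 4 * c' 6 * c' (n + 3) * c' (n - 3)
      + c' 4 * (c' 5 ^ 2 - c' 3 ^ 2 * c' 6) * c' (n + 2) * c' (n - 2)
      + (c' 3 ^ 3 * c' 7 - c' 8) * c' (n + 1) * c' (n - 1)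
      - c' 3 * c' 4 * c' 7 * c' n ^ 2)
    (hS11' : ∀ n : ℤ, c' 3 * c' 5 * c' (n + 6) * c' (n - 5) =
      c' 3 * c' 4 * c' 7 * c' (n + 4) * c' (n - 3)
      + (c' 5 ^ 2 * c' 6 - c' 3 * c' 4 ^ 2 * c' 7) * c' (n + 3) * c' (n - 2)
      + c' 3 * (c' 3 * c' 4 * c' 8 - c' 9) * c' (n + 2) * c' (n - 1)
      - c' 3 * c' 5 * c' 8 * c' (n + 1) * c' n)
    (heq : ∀ n : ℤ, 3 ≤ n → n ≤ 10 → c n = c' n) :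
    ∀ n : ℤ, c n = c' n :=
  stmt9_general p c hneg h0 h1 h2 hS8 hS9 hS10 hS11 h3 h4 h5 hfour c' hneg' h0' h1' h2' hS8' hS9'
    hS10' hS11' heq
end
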